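/- arXiv:1505.06234 — 3 statements merged into one kernel-verified Lean document; each statement's English description precedes it below -/
import Mathlib

section
/- Let G be a graph with path-chromatic number k ≥ 2 and let σ = v_1,...,v_n be a special vertex enumeration of G with associated bags X_1,...,X_n. Then for every j ∈ [n], if χ(G[X_j]) = k then χ(G[X_j \ {v_j}]) = k−1. -/
open SimpleGraph

universe u
variable {V : Type u}

/-- Closed neighborhood of a vertex set. -/
def closedNbhd (G : SimpleGraph V) (U : Set V) : Set V :=
  U ∪ {v | ∃ u ∈ U, G.Adj u v}

/-- Bag `X_ℓ = N[{v_1,…,v_ℓ}] \ {v_1,…,v_{ℓ-1}}` of the enumeration `σ`. -/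
def bagX {n : ℕ} (G : SimpleGraph V) (σ : Fin n ≃ V) (ℓ : Fin n) : Set V :=
  closedNbhd G {v | ∃ j ≤ ℓ, v = σ j} \ {v | ∃ j < ℓ, v = σ j}

/-- Chromatic number of the subgraph induced by `S`. -/
noncomputable def chrom (G : SimpleGraph V) (S : Set V) : ℕ :=
  sInf {k | (G.induce S).Colorable k}

/-- Chromatic number of the path-decomposition `P_σ^G`. -/
noncomputable def decompChrom {n : ℕ} (G : SimpleGraph V) (σ : Fin n ≃ V) : ℕ :=
  sInf {k | ∀ ℓ, (G.induce (bagX G σ ℓ)).Colorable k}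

/-- `B` is a path-decomposition of `G`. -/
def IsPathDecomp (G : SimpleGraph V) {s : ℕ} (B : Fin s → Set V) : Prop :=
  (∀ v, ∃ t, v ∈ B t) ∧
  (∀ u v, G.Adj u v → ∃ t, u ∈ B t ∧ v ∈ B t) ∧
  (∀ v (t₁ t₂ t₃ : Fin s), t₁ ≤ t₂ → t₂ ≤ t₃ → v ∈ B t₁ → v ∈ B t₃ → v ∈ B t₂)

/-- Path-chromatic number. -/
noncomputable def pathChromatic (G : SimpleGraph V) : ℕ :=
  sInf {k | ∃ (s : ℕ) (B : Fin s → Set V), IsPathDecomp G B ∧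
    ∀ t, (G.induce (B t)).Colorable k}

/-- `(T, B)` is a tree-decomposition of `G`. -/
def IsTreeDecomp {ι : Type u} (G : SimpleGraph V) (T : SimpleGraph ι) (B : ι → Set V) : Prop :=
  T.IsTree ∧
  (∀ v, ∃ t, v ∈ B t) ∧
  (∀ u v, G.Adj u v → ∃ t, u ∈ B t ∧ v ∈ B t) ∧
  (∀ v, (T.induce {t | v ∈ B t}).Connected)

/-- Tree-chromatic number. -/
noncomputable def treeChromatic (G : SimpleGraph V) : ℕ :=
  sInf {k | ∃ (ι : Type u) (T : SimpleGraph ι) (B : ι → Set V),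
    IsTreeDecomp G T B ∧ ∀ t, (G.induce (B t)).Colorable k}

/-- A special enumeration. -/
def IsSpecial {n : ℕ} (G : SimpleGraph V) (σ : Fin n ≃ V) : Prop :=
  decompChrom G σ = pathChromatic G ∧
  ∀ i : Fin n, chrom G (bagX G σ i) = pathChromatic G →
    ∀ j : Fin n, j < i → ¬ G.Adj (σ j) (σ i)

/-- The graph `R_m(G)`; the vertex `(i, none)` plays the role of `(i, v₀)`. -/
def Rm (G : SimpleGraph V) (m : ℕ) : SimpleGraph (Fin m × Option V) :=
  SimpleGraph.fromRel (fun p q =>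
    (p.1 = q.1 ∧ p.2 = none) ∨
    (p.1 ≠ q.1 ∧ ∃ u v, p.2 = some u ∧ q.2 = some v ∧ G.Adj u v))

/-- `[I, U] = { (i, v) : i ∈ I, v ∈ U }` inside `R_m(G)`. -/
def box {m : ℕ} (I : Set (Fin m)) (U : Set V) : Set (Fin m × Option V) :=
  {p | p.1 ∈ I ∧ ∃ v ∈ U, p.2 = some v}

/-- Index of the first vertex in the enumeration `μ` satisfying `P`. -/
noncomputable def firstIdx {N : ℕ} {W : Type*} (μ : Fin N ≃ W) (P : W → Prop) : ℕ :=
  sInf {ℓ : ℕ | ∃ h : ℓ < N, P (μ ⟨ℓ, h⟩)}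

/-- The cycle `C_n`: `v_j ~ v_{j'}` iff `|j - j'| ∈ {1, n-1}`. -/
def cyc (n : ℕ) : SimpleGraph (Fin n) :=
  SimpleGraph.fromRel (fun a b => (b : ℕ) - (a : ℕ) = 1 ∨ (b : ℕ) - (a : ℕ) = n - 1)

/-- The Mycielskian of a graph. -/
def mycielskian (G : SimpleGraph V) : SimpleGraph (Option (V ⊕ V)) :=
  SimpleGraph.fromRel (fun a b =>
    match a, b with
    | some (Sum.inl u), some (Sum.inl v) => G.Adj u v
    | some (Sum.inr u), some (Sum.inl v) => G.Adj u v
    | none, some (Sum.inr _) => True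
    | _, _ => False)

/-- Vertex types and graphs of the Mycielski family: `MycS 2` is a single edge. -/
def MycS : ℕ → Σ W : Type, SimpleGraph W
  | 0 => ⟨Empty, ⊥⟩
  | 1 => ⟨Empty, ⊥⟩
  | 2 => ⟨Fin 2, ⊤⟩
  | (n + 3) => ⟨Option ((MycS (n + 2)).1 ⊕ (MycS (n + 2)).1), mycielskian (MycS (n + 2)).2⟩

/-- The vertex type of the `k`-Mycielski graph. -/
def MycV (k : ℕ) : Type := (MycS k).1

/-- The `k`-Mycielski graph `M_k`. -/
def Myc (k : ℕ) : SimpleGraph (MycV k) := (MycS k).2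

/-! ### Auxiliary lemmas for `stmt_7` -/

lemma colorable_card [Fintype V] (G : SimpleGraph V) (S : Set V) :
    (G.induce S).Colorable (Fintype.card V) := by
  classical
  have : Fintype ↥S := Fintype.ofFinite _
  exact (SimpleGraph.colorable_of_fintype _).mono
    (Fintype.card_le_of_injective _ Subtype.val_injective)

lemma chrom_le [Fintype V] (G : SimpleGraph V) (S : Set V) (m : ℕ)
    (h : (G.induce S).Colorable m) : chrom G S ≤ m :=
  Nat.sInf_le h

lemma chrom_colorable [Fintype V] (G : SimpleGraph V) (S : Set V) :
    (G.induce S).Colorable (chrom G S) := by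
  have h : Fintype.card V ∈ {m | (G.induce S).Colorable m} := colorable_card G S
  exact Nat.sInf_mem ⟨_, h⟩

lemma chrom_mono [Fintype V] (G : SimpleGraph V) {S T : Set V} (h : S ⊆ T) :
    chrom G S ≤ chrom G T := by
  obtain ⟨C⟩ := chrom_colorable G T
  exact chrom_le G S _ ⟨C.comp ⟨fun x => ⟨x.1, h x.2⟩, fun {a b} hab => hab⟩⟩

lemma chrom_empty [Fintype V] (G : SimpleGraph V) : chrom G (∅ : Set V) = 0 :=
  Nat.eq_zero_of_le_zero (chrom_le G _ 0
    ⟨SimpleGraph.Coloring.mk (fun x => x.2.elim) (fun {a b} _ => a.2.elim)⟩)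

lemma chrom_le_del [Fintype V] (G : SimpleGraph V) (S : Set V) (v : V) :
    chrom G S ≤ chrom G (S \ {v}) + 1 := by
  classical
  obtain ⟨C⟩ := chrom_colorable G (S \ {v})
  refine chrom_le G S _ ⟨SimpleGraph.Coloring.mk
    (fun x => if h : (x : V) = v then Fin.last _ else (C ⟨x, x.2, h⟩).castSucc) ?_⟩
  rintro ⟨a, ha⟩ ⟨b, hb⟩ hab
  have hadj : G.Adj a b := hab
  dsimp only
  split_ifs with h1 h2 h2
  · exact absurd (h1 ▸ h2 ▸ hadj) (G.irrefl)
  · exact (Fin.castSucc_lt_last _).ne'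
  · exact (Fin.castSucc_lt_last _).ne
  · intro hcol
    exact C.valid (show (G.induce (S \ {v})).Adj ⟨a, ha, h1⟩ ⟨b, hb, h2⟩ from hadj)
      (Fin.castSucc_injective _ hcol)

lemma mem_bagX {n : ℕ} {G : SimpleGraph V} {σ : Fin n ≃ V} {ℓ : Fin n} {w : V} :
    w ∈ bagX G σ ℓ ↔
      ((∃ i ≤ ℓ, w = σ i) ∨ ∃ u, (∃ i ≤ ℓ, u = σ i) ∧ G.Adj u w) ∧
        ¬ ∃ i < ℓ, w = σ i :=
  Iff.rfl

lemma bag_step {n : ℕ} (G : SimpleGraph V) (σ : Fin n ≃ V) (ℓ ℓ' : Fin n)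
    (h : (ℓ' : ℕ) = (ℓ : ℕ) + 1) :
    bagX G σ ℓ \ {σ ℓ} ⊆ bagX G σ ℓ' := by
  rintro w ⟨hw, hne⟩
  rw [mem_bagX] at hw ⊢
  obtain ⟨h1, h2⟩ := hw
  have hle : ℓ ≤ ℓ' := by rw [Fin.le_def]; omega
  constructor
  · rcases h1 with ⟨i, hi, rfl⟩ | ⟨u, ⟨i, hi, rfl⟩, hadj⟩
    · exact Or.inl ⟨i, le_trans hi hle, rfl⟩
    · exact Or.inr ⟨σ i, ⟨i, le_trans hi hle, rfl⟩, hadj⟩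
  · rintro ⟨i, hi, rfl⟩
    rw [Fin.lt_def, h] at hi
    rcases Nat.lt_succ_iff_lt_or_eq.mp hi with h' | h'
    · exact h2 ⟨i, by rw [Fin.lt_def]; exact h', rfl⟩
    · exact hne (by rw [show i = ℓ from Fin.ext h']; exact rfl)

/-- For a special enumeration `σ` of a graph with `χ_P(G) = k ≥ 2`: if `χ(X_j) = k`
then `χ(X_j \ {v_j}) = k - 1`. -/
theorem stmt_7 {V : Type u} [Fintype V] (G : SimpleGraph V) {n k : ℕ} (hk : 2 ≤ k)
    (hG : pathChromatic G = k) (σ : Fin n ≃ V) (hσ : IsSpecial G σ)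
    (j : Fin n) (hj : chrom G (bagX G σ j) = k) :
    chrom G (bagX G σ j \ {σ j}) = k - 1 := by
  classical
  have hmem : ∀ ℓ, (G.induce (bagX G σ ℓ)).Colorable k := by
    have h0 : decompChrom G σ ∈ {m | ∀ ℓ, (G.induce (bagX G σ ℓ)).Colorable m} :=
      Nat.sInf_mem ⟨Fintype.card V, fun ℓ => colorable_card G _⟩
    rwa [hσ.1, hG] at h0
  have hle : ∀ ℓ, chrom G (bagX G σ ℓ) ≤ k := fun ℓ => chrom_le G _ _ (hmem ℓ)
  have hspec : ∀ i : Fin n, k ≤ chrom G (bagX G σ i) →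
      ∀ j' : Fin n, j' < i → ¬ G.Adj (σ j') (σ i) := fun i hki =>
    hσ.2 i (by rw [hG]; exact le_antisymm (hle i) hki)
  have hub : chrom G (bagX G σ j \ {σ j}) ≤ k - 1 := by
    by_contra hcon
    push_neg at hcon
    have hk' : k ≤ chrom G (bagX G σ j \ {σ j}) := by omega
    have key : ∀ d, ∀ ℓ : Fin n, n - 1 - (ℓ : ℕ) = d →
        k ≤ chrom G (bagX G σ ℓ \ {σ ℓ}) → False := by
      intro d
      induction d with
      | zero =>
        intro ℓ hℓ hk2
        have hlt := ℓ.is_lt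
        have hempty : bagX G σ ℓ \ {σ ℓ} = ∅ := by
          ext w
          simp only [Set.mem_empty_iff_false, iff_false]
          rintro ⟨hw, hne⟩
          rw [mem_bagX] at hw
          refine hw.2 ⟨σ.symm w, ?_, (σ.apply_symm_apply w).symm⟩
          rw [Fin.lt_def]
          have h1 : (σ.symm w : ℕ) < n := (σ.symm w).is_lt
          have h2 : σ.symm w ≠ ℓ := fun h =>
            hne (by rw [← h, σ.apply_symm_apply]; exact rfl)
          have h3 : (σ.symm w : ℕ) ≠ (ℓ : ℕ) := fun hh => h2 (Fin.ext hh)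
          omega
        rw [hempty, chrom_empty] at hk2
        omega
      | succ d ih =>
        intro ℓ hℓ hk2
        have hlt := ℓ.is_lt
        have hlt' : (ℓ : ℕ) + 1 < n := by omega
        set ℓ' : Fin n := ⟨(ℓ : ℕ) + 1, hlt'⟩ with hℓ'
        have hval : (ℓ' : ℕ) = (ℓ : ℕ) + 1 := rfl
        have hsub := bag_step G σ ℓ ℓ' hval
        have h1 : k ≤ chrom G (bagX G σ ℓ') := le_trans hk2 (chrom_mono G hsub)
        have h2 := hspec ℓ' h1
        have hltℓ : ℓ < ℓ' := by rw [Fin.lt_def, hval]; omega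
        have hnotin : σ ℓ' ∉ bagX G σ ℓ := by
          intro hmem'
          rw [mem_bagX] at hmem'
          rcases hmem'.1 with ⟨i, hi, heq⟩ | ⟨u, ⟨i, hi, rfl⟩, hadj⟩
          · have hie : ℓ' = i := σ.injective heq
            have := Fin.le_def.mp hi
            have := Fin.val_eq_of_eq hie
            omega
          · exact h2 i (lt_of_le_of_lt hi hltℓ) hadj
        have hsub2 : bagX G σ ℓ \ {σ ℓ} ⊆ bagX G σ ℓ' \ {σ ℓ'} := fun w hw =>
          ⟨hsub hw, fun hww => hnotin (by rw [← hww]; exact hw.1)⟩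
        exact ih ℓ' (by rw [hval]; omega) (le_trans hk2 (chrom_mono G hsub2))
    exact key _ j rfl hk'
  have hlb : k - 1 ≤ chrom G (bagX G σ j \ {σ j}) := by
    have := chrom_le_del G (bagX G σ j) (σ j)
    omega
  omega
end

section
/- For all integers n ≥ 4 and all positive integers m, the graph R_m(C_n) has tree-chromatic number exactly 2. -/
open SimpleGraph

universe u
variable {V : Type u}

/-!
Use a star decomposition of `R_m(G)` for a triangle-free `G` and a vertex `w` with `G - w`
bipartite (for `C_n`, `n ≥ 4`, any vertex). The center bag holds all copies of the vertices other
than `w`; edges between copies are edges of `G`, so a 2-colouring of `G - w` colours it. Leaf `i`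
holds row `i` (with its hub `(i, v₀)`) and all copies of neighbours of `w`: colour the non-hub
vertices of row `i` with one colour and everything else with the other. The hub only sees its own
row, and the copies of neighbours of `w` are independent since `G` has no triangle. A vertex in two
leaves is a copy of a neighbour of `w`, hence lies in the center. Conversely any bag containing an
edge needs two colours.
-/

section TreeDecomposition

variable {ι : Type u} {G : SimpleGraph V} {T : SimpleGraph ι} {B : ι → Set V}

lemma IsTreeDecomp.two_le_of_colorable {k : ℕ} (hTB : IsTreeDecomp G T B)
    (hB : ∀ t, (G.induce (B t)).Colorable k) {u v : V} (huv : G.Adj u v) : 2 ≤ k := by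
  obtain ⟨t, hu, hv⟩ := hTB.2.2.1 u v huv
  have h2 : 2 ≤ (G.induce (B t)).chromaticNumber :=
    two_le_chromaticNumber_of_adj (u := ⟨u, hu⟩) (v := ⟨v, hv⟩) huv
  exact_mod_cast h2.trans (hB t).chromaticNumber_le

lemma treeChromatic_eq_two (hTB : IsTreeDecomp G T B) (hB : ∀ t, (G.induce (B t)).Colorable 2)
    {u v : V} (huv : G.Adj u v) : treeChromatic G = 2 := by
  have hmem : 2 ∈ {k | ∃ (ι : Type u) (T : SimpleGraph ι) (B : ι → Set V),
      IsTreeDecomp G T B ∧ ∀ t, (G.induce (B t)).Colorable k} := ⟨ι, T, B, hTB, hB⟩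
  refine le_antisymm (Nat.sInf_le hmem) ?_
  obtain ⟨_, _, _, hTB', hB'⟩ := Nat.sInf_mem ⟨2, hmem⟩
  exact hTB'.two_le_of_colorable hB' huv

lemma isTreeDecomp_starGraph (r : ι) (hcover : ∀ v, ∃ t, v ∈ B t)
    (hedge : ∀ u v, G.Adj u v → ∃ t, u ∈ B t ∧ v ∈ B t)
    (hcenter : ∀ v s t, v ∈ B s → v ∈ B t → s ≠ t → v ∈ B r) :
    IsTreeDecomp G (starGraph r) B := by
  refine ⟨isTree_starGraph r, hcover, hedge, fun v => ?_⟩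
  by_cases hr : v ∈ B r
  · exact .of_isUniversal (v := ⟨r, hr⟩) fun ⟨s, _⟩ hne =>
      starGraph_center_adj fun h => hne (Subtype.ext h)
  · obtain ⟨t, ht⟩ := hcover v
    exact .of_isUniversal (v := ⟨t, ht⟩) fun ⟨s, hs⟩ hne =>
      absurd (hcenter v t s ht hs fun h => hne (Subtype.ext h)) hr

end TreeDecomposition

section Rm

variable {G : SimpleGraph V} {m : ℕ} {i j : Fin m} {u v : V} {I : Set (Fin m)} {U : Set V}

@[simp] lemma rm_adj_none_none : ¬ (Rm G m).Adj (i, none) (j, none) := by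
  simp +contextual [Rm, eq_comm]

@[simp] lemma rm_adj_none_some : (Rm G m).Adj (i, none) (j, some v) ↔ i = j := by
  simp [Rm, eq_comm]

@[simp] lemma rm_adj_some_none : (Rm G m).Adj (i, some u) (j, none) ↔ i = j := by
  rw [(Rm G m).adj_comm, rm_adj_none_some, eq_comm]

@[simp] lemma rm_adj_some_some :
    (Rm G m).Adj (i, some u) (j, some v) ↔ i ≠ j ∧ G.Adj u v := by
  simp only [Rm, fromRel_adj]
  grind [G.adj_comm, G.ne_of_adj]

@[simp] lemma some_mem_box : (i, some v) ∈ box I U ↔ i ∈ I ∧ v ∈ U := by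
  simp [box]

@[simp] lemma none_notMem_box : (i, none) ∉ box I U := by
  simp [box]

lemma colorable_induce_box {k : ℕ} (h : (G.induce U).Colorable k) :
    ((Rm G m).induce (box I U)).Colorable k := by
  have hsome : ∀ p : box I U, ∃ v ∈ U, p.1.2 = some v := fun p => p.2.2
  refine h.of_hom ⟨fun p => ⟨(hsome p).choose, (hsome p).choose_spec.1⟩, ?_⟩
  rintro ⟨⟨i, a⟩, hp⟩ ⟨⟨j, b⟩, hq⟩ (hpq : (Rm G m).Adj (i, a) (j, b))
  rw [show a = _ from (hsome ⟨_, hp⟩).choose_spec.2,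
    show b = _ from (hsome ⟨_, hq⟩).choose_spec.2] at hpq
  exact (rm_adj_some_some.1 hpq).2

lemma colorable_two_induce_row_union_box (hU : G.IsIndepSet U) :
    ((Rm G m).induce ({p | p.1 = i} ∪ box I U)).Colorable 2 := by
  have hcol : ∀ p ∈ {p : Fin m × Option V | p.1 = i} ∪ box I U,
      ∀ q ∈ {p : Fin m × Option V | p.1 = i} ∪ box I U,
      (Rm G m).Adj p q → ¬ (p.1 = i ∧ p.2.isSome ↔ q.1 = i ∧ q.2.isSome) := by
    rintro ⟨j, _ | u⟩ hp ⟨k, _ | v⟩ hq hpq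
    · exact absurd hpq rm_adj_none_none
    · simp_all
    · simp_all
    · obtain ⟨hjk, huv⟩ := rm_adj_some_some.1 hpq
      have : ¬ (u ∈ U ∧ v ∈ U) := fun ⟨hu, hv⟩ => hU hu hv (G.ne_of_adj huv) huv
      simp_all
      grind
  simpa using (Coloring.mk (fun p => decide (p.1.1 = i ∧ p.1.2.isSome))
    fun {p q} hpq => by rw [Ne, decide_eq_decide]; exact hcol _ p.2 _ q.2 hpq).colorable

end Rm

/-- The leaves are indexed by `ULift (Fin m)` because `IsTreeDecomp` wants the tree in the universe
of `V`. -/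
def rmStarBags (G : SimpleGraph V) (w : V) (m : ℕ) :
    Option (ULift.{u} (Fin m)) → Set (Fin m × Option V)
  | none => box Set.univ {v | v ≠ w}
  | some i => {p | p.1 = i.down} ∪ box Set.univ (G.neighborSet w)

section RmStarBags

variable {G : SimpleGraph V} {w : V} {m : ℕ}

lemma isTreeDecomp_rmStarBags : IsTreeDecomp (Rm G m) (starGraph none) (rmStarBags G w m) := by
  refine isTreeDecomp_starGraph none (fun p => ⟨some ⟨p.1⟩, Or.inl rfl⟩) ?_ ?_
  · rintro ⟨i, _ | u⟩ ⟨j, _ | v⟩ hpq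
    · exact absurd hpq rm_adj_none_none
    · exact ⟨some ⟨i⟩, Or.inl rfl, Or.inl (rm_adj_none_some.1 hpq).symm⟩
    · exact ⟨some ⟨i⟩, Or.inl rfl, Or.inl (rm_adj_some_none.1 hpq).symm⟩
    · obtain ⟨-, huv⟩ := rm_adj_some_some.1 hpq
      by_cases hu : u = w
      · subst hu
        exact ⟨some ⟨i⟩, Or.inl rfl, Or.inr (some_mem_box.2 ⟨trivial, huv⟩)⟩
      by_cases hv : v = w
      · subst hv
        exact ⟨some ⟨j⟩, Or.inr (some_mem_box.2 ⟨trivial, huv.symm⟩), Or.inl rfl⟩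
      exact ⟨none, some_mem_box.2 ⟨trivial, hu⟩, some_mem_box.2 ⟨trivial, hv⟩⟩
  · rintro p (_ | s) (_ | t) hs ht hst
    · exact hs
    · exact hs
    · exact ht
    have hp : p ∈ box Set.univ (G.neighborSet w) := by
      rcases hs with hs | hs
      · rcases ht with ht | ht
        · exact absurd (congrArg some (ULift.ext _ _ (hs.symm.trans ht))) hst
        · exact ht
      · exact hs
    obtain ⟨-, v, hv, hpv⟩ := hp
    exact ⟨trivial, v, (G.ne_of_adj hv).symm, hpv⟩

lemma colorable_rmStarBags (hG : G.CliqueFree 3) (hw : (G.induce {v | v ≠ w}).Colorable 2) :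
    ∀ t, ((Rm G m).induce (rmStarBags G w m t)).Colorable 2
  | none => colorable_induce_box hw
  | some _ => colorable_two_induce_row_union_box (isIndepSet_neighborSet_of_triangleFree _ hG w)

theorem treeChromatic_rm_eq_two (hG : G.CliqueFree 3) (hw : (G.induce {v | v ≠ w}).Colorable 2)
    (hm : 0 < m) : treeChromatic (Rm G m) = 2 :=
  treeChromatic_eq_two isTreeDecomp_rmStarBags (colorable_rmStarBags hG hw)
    (rm_adj_none_some.2 rfl : (Rm G m).Adj (⟨0, hm⟩, none) (⟨0, hm⟩, some w))

end RmStarBags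

section Cycle

variable {n : ℕ}

lemma cyc_adj_iff {a b : Fin n} :
    (cyc n).Adj a b ↔ (a : ℕ) ≠ b ∧
      ((b : ℕ) - a = 1 ∨ (b : ℕ) - a = n - 1 ∨ (a : ℕ) - b = 1 ∨ (a : ℕ) - b = n - 1) := by
  simp only [cyc, fromRel_adj, ne_eq, Fin.ext_iff, or_assoc]

lemma cyc_cliqueFree_three (hn : 4 ≤ n) : (cyc n).CliqueFree 3 := by
  classical
  rintro s ⟨hs, hcard⟩
  obtain ⟨a, b, c, hab, hac, hbc, rfl⟩ := Finset.card_eq_three.1 hcard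
  have adj_ab := cyc_adj_iff.1 (hs (by simp) (by simp) hab)
  have adj_ac := cyc_adj_iff.1 (hs (by simp) (by simp) hac)
  have adj_bc := cyc_adj_iff.1 (hs (by simp) (by simp) hbc)
  omega

/-- Without vertex `0` the cycle is the path `1, …, n - 1`, coloured by parity. -/
lemma colorable_two_induce_cyc_ne_zero (hn : 0 < n) :
    ((cyc n).induce {v | v ≠ ⟨0, hn⟩}).Colorable 2 := by
  refine (colorable_iff_exists_bdd_nat_coloring 2).2
    ⟨Coloring.mk (fun v => (v.1 : ℕ) % 2) fun {a b} hab => ?_, fun v => Nat.mod_lt _ two_pos⟩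
  have ha := a.2
  have hb := b.2
  simp only [Set.mem_ofPred_eq, ne_eq, Fin.ext_iff] at ha hb
  have := cyc_adj_iff.1 (show (cyc n).Adj a b from hab)
  omega

end Cycle

/-- Lemma 5: for `n ≥ 4` and `m ≥ 1`, `R_m(C_n)` has tree-chromatic number `2`. -/
theorem stmt_13 (n m : ℕ) (hn : 4 ≤ n) (hm : 1 ≤ m) :
    treeChromatic (Rm (cyc n) m) = 2 :=
  treeChromatic_rm_eq_two (cyc_cliqueFree_three hn) (colorable_two_induce_cyc_ne_zero (by omega)) hm
end

section
/- For all positive integers n, m and all integers r ≥ m+n, the r-th Mycielski graph M_r contains R_m(M_n) as an induced subgraph. -/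
open SimpleGraph

universe u
variable {V : Type u}

/-!
Each Mycielski step adds one copy of `G` to an `R_m(G)` already sitting inside `H`, provided
`H` also contains a base copy `ι(G)` whose vertex `ι v` is adjacent to the copy vertex `(i, u)`
exactly when `u ~ v` and to no hub `(i, v₀)`. In the Mycielskian of `H` the shadows of `ι(G)`
then behave towards the old copies as a new copy does, and the new apex `w` is its hub. The
image of `ι(G)` in the Mycielskian is again a base copy, so the step can be iterated: starting
from `R_0(M_n) ⊆ M_n` (or from `R_1(M_1) ⊆ M_2` when `n = 1`) this gives
`R_m(M_n) ⊆ M_{m+n} ⊆ M_r`, as `M_k ⊆ M_{k+1}`.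
-/

section Mycielskian
variable {G : SimpleGraph V}

@[simp] lemma mycielskian_adj_inl_inl {u v : V} :
    (mycielskian G).Adj (some (.inl u)) (some (.inl v)) ↔ G.Adj u v := by
  simp only [mycielskian, fromRel_adj, ne_eq, Option.some.injEq, Sum.inl.injEq]
  exact ⟨fun h => h.2.elim id .symm, fun h => ⟨h.ne, .inl h⟩⟩

@[simp] lemma mycielskian_adj_inl_inr {u v : V} :
    (mycielskian G).Adj (some (.inl u)) (some (.inr v)) ↔ G.Adj v u := by
  simp [mycielskian]

@[simp] lemma mycielskian_adj_inr_inl {u v : V} :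
    (mycielskian G).Adj (some (.inr u)) (some (.inl v)) ↔ G.Adj u v := by
  simp [mycielskian]

@[simp] lemma mycielskian_not_adj_inr_inr {u v : V} :
    ¬ (mycielskian G).Adj (some (.inr u)) (some (.inr v)) := by
  simp [mycielskian]

@[simp] lemma mycielskian_not_adj_inl_none {v : V} :
    ¬ (mycielskian G).Adj (some (.inl v)) none := by
  simp [mycielskian]

@[simp] lemma mycielskian_not_adj_none_inl {v : V} :
    ¬ (mycielskian G).Adj none (some (.inl v)) := by
  simp [mycielskian]

@[simp] lemma mycielskian_adj_inr_none {v : V} :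
    (mycielskian G).Adj (some (.inr v)) none := by
  simp [mycielskian]

@[simp] lemma mycielskian_adj_none_inr {v : V} :
    (mycielskian G).Adj none (some (.inr v)) := by
  simp [mycielskian]

variable (G) in
def mycielskianInl : G ↪g mycielskian G where
  toFun v := some (.inl v)
  inj' _ _ h := by simpa using h
  map_rel_iff' := mycielskian_adj_inl_inl

@[simp] lemma mycielskianInl_apply (v : V) : mycielskianInl G v = some (.inl v) := rfl

end Mycielskian

section Rm
variable {G : SimpleGraph V} {m : ℕ}

@[simp] lemma Rm_adj_some_some {i j : Fin m} {u v : V} :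
    (Rm G m).Adj (i, some u) (j, some v) ↔ i ≠ j ∧ G.Adj u v := by
  simp only [Rm, fromRel_adj, ne_eq, Prod.mk.injEq, Option.some.injEq, reduceCtorEq, and_false,
    exists_and_left, exists_eq_left', false_or]
  exact ⟨fun h => h.2.elim id fun h => ⟨Ne.symm h.1, h.2.symm⟩,
    fun h => ⟨fun e => h.2.ne e.2, .inl h⟩⟩

@[simp] lemma Rm_adj_none_some {i j : Fin m} {v : V} :
    (Rm G m).Adj (i, none) (j, some v) ↔ i = j := by
  simp [Rm]

@[simp] lemma Rm_adj_some_none {i j : Fin m} {v : V} :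
    (Rm G m).Adj (i, some v) (j, none) ↔ i = j := by
  simp [Rm, eq_comm]

@[simp] lemma Rm_not_adj_none_none {i j : Fin m} :
    ¬ (Rm G m).Adj (i, none) (j, none) := by
  simpa [Rm] using fun h => ⟨h, Ne.symm h⟩

end Rm

instance : IsEmpty (MycV 1) := inferInstanceAs (IsEmpty Empty)

structure RmPlacement {W : Type*} (G : SimpleGraph V) (m : ℕ) (H : SimpleGraph W) where
  copies : Rm G m ↪g H
  base : G ↪g H
  adj_base_some : ∀ v i u, H.Adj (base v) (copies (i, some u)) ↔ G.Adj v u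
  not_adj_base_none : ∀ v i, ¬ H.Adj (base v) (copies (i, none))

namespace RmPlacement
variable {W : Type*} {G : SimpleGraph V} {H : SimpleGraph W} {m : ℕ}

variable (G) in
def zero : RmPlacement G 0 G where
  copies := ⟨.ofIsEmpty, fun {p} => p.1.elim0⟩
  base := .refl
  adj_base_some _ i := i.elim0
  not_adj_base_none _ i := i.elim0

def mycOne : RmPlacement (Myc 1) 1 (Myc 2) where
  copies := ⟨⟨fun _ => (0 : Fin 2), fun p q _ => Subsingleton.elim p q⟩, fun {p q} => by
    obtain ⟨i, _ | ⟨⟨⟩⟩⟩ := p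
    obtain ⟨j, _ | ⟨⟨⟩⟩⟩ := q
    exact iff_of_false (Myc 2).irrefl Rm_not_adj_none_none⟩
  base := ⟨.ofIsEmpty, fun {v} => isEmptyElim v⟩
  adj_base_some v := isEmptyElim v
  not_adj_base_none v := isEmptyElim v

/-- The new copy has index `Fin.last m`: its hub is the apex `none` and its vertex `v` is the
shadow of `base v`. -/
def succCopies (P : RmPlacement G m H) (p : Fin (m + 1) × Option V) : Option (W ⊕ W) :=
  Fin.lastCases (p.2.map fun v => .inr (P.base v)) (fun i => some (.inl (P.copies (i, p.2)))) p.1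

lemma succCopies_injective (P : RmPlacement G m H) : Function.Injective P.succCopies := by
  rintro ⟨i, x⟩ ⟨j, y⟩ h
  cases i using Fin.lastCases <;> cases j using Fin.lastCases <;> cases x <;> cases y <;>
    simp_all [succCopies]

lemma adj_succCopies (P : RmPlacement G m H) (p q : Fin (m + 1) × Option V) :
    (mycielskian H).Adj (P.succCopies p) (P.succCopies q) ↔ (Rm G (m + 1)).Adj p q := by
  obtain ⟨i, x⟩ := p
  obtain ⟨j, y⟩ := q
  cases i using Fin.lastCases <;> cases j using Fin.lastCases <;> cases x <;> cases y <;>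
    simp [succCopies, P.adj_base_some, P.not_adj_base_none, (Fin.castSucc_ne_last _).symm,
      G.adj_comm]

protected def mycielskian (P : RmPlacement G m H) : RmPlacement G (m + 1) (mycielskian H) where
  copies := ⟨⟨P.succCopies, P.succCopies_injective⟩, P.adj_succCopies _ _⟩
  base := (mycielskianInl H).comp P.base
  adj_base_some v i u := by
    cases i using Fin.lastCases <;> simp [succCopies, P.adj_base_some, G.adj_comm]
  not_adj_base_none v i := by
    cases i using Fin.lastCases <;> simp [succCopies, P.not_adj_base_none]

def iterate {k m₀ : ℕ} (P : RmPlacement G m₀ (Myc (k + 2))) :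
    (j : ℕ) → RmPlacement G (m₀ + j) (Myc (k + j + 2))
  | 0 => P
  | j + 1 => (P.iterate j).mycielskian

end RmPlacement

lemma nonempty_embedding_myc_of_le {a b : ℕ} (ha : 2 ≤ a) (hab : a ≤ b) :
    Nonempty (Myc a ↪g Myc b) := by
  induction b, hab using Nat.le_induction with
  | base => exact ⟨.refl⟩
  | succ b hab ih =>
    obtain ⟨c, rfl⟩ : ∃ c, b = c + 2 := ⟨b - 2, by omega⟩
    exact ⟨ih.some.trans (mycielskianInl (Myc (c + 2)))⟩

lemma RmPlacement.nonempty_embedding_myc {G : SimpleGraph V} {k m₀ m r : ℕ}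
    (P : RmPlacement G m₀ (Myc (k + 2))) (hm : m₀ ≤ m) (hr : k + m + 2 ≤ r + m₀) :
    Nonempty (Rm G m ↪g Myc r) := by
  obtain ⟨j, rfl⟩ : ∃ j, m = m₀ + j := ⟨m - m₀, by omega⟩
  obtain ⟨e⟩ := nonempty_embedding_myc_of_le (a := k + j + 2) (b := r) (by omega) (by omega)
  exact ⟨(P.iterate j).copies.trans e⟩

/-- Lemma 8: for positive `n, m` and `r ≥ m + n`, the Mycielski graph `M_r` contains
`R_m(M_n)` as an induced subgraph. -/
theorem stmt_16 (n m r : ℕ) (hn : 1 ≤ n) (hm : 1 ≤ m) (hr : m + n ≤ r) :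
    Nonempty (Rm (Myc n) m ↪g Myc r) := by
  match n, hn with
  | 1, _ => exact RmPlacement.mycOne.nonempty_embedding_myc (k := 0) hm (by omega)
  | k + 2, _ => exact (RmPlacement.zero _).nonempty_embedding_myc m.zero_le (by omega)
end
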